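/- arXiv:2509.16999 — 3 statements merged into one kernel-verified Lean document; each statement's English description precedes it below -/
import Mathlib

section
/- Stability of lift zonoids: let μ_D = Σ_{p∈D} a_p δ_p and μ_{D'} = Σ_{q∈D'} b_q δ_q be persistence diagrams (finite sets D, D' ⊂ {x<y} ⊂ R^2 with positive integer multiplicities), and let ω : R^2 → (0,1] be a stable weighting with constants C, C', i.e. p ↦ ω(p)(1,p) is C-Lipschitz and ‖ω(p)(1,p)‖_2 ≤ C'·(y−x)/2 for p = (x,y), x < y. Then the Hausdorff distance between the lift zonoids of the reweighted diagrams satisfies d_H(Z_{μ^ω_D}, Z_{μ^ω_{D'}}) ≤ √2·max{C, C'}·W_1(μ_D, μ_{D'}), where W_1 is the 1-Wasserstein distance between persistence diagrams (partial optimal transport with sup-norm ground cost and distance to the diagonal ‖p−Δ‖_∞ = (y−x)/2 for unmatched mass). -/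
/-!
The lift zonoid of `(D, a)` is the Minkowski sum of the segments `[0, a_p v_p]`, where
`v_p = ω(p) (1, p)`. The Hausdorff distance is subadditive under Minkowski sums and
`d_H([0, u], [0, u']) ≤ ‖u - u'‖`, so a partial matching `γ` bounds `d_H` by
`∑ ‖a_p v_p - b_{γ p} v_{γ p}‖` over matched points plus `∑ ‖a_p v_p‖` over unmatched ones
(compared with the segment `[0, 0]`). Writing `a_p v_p - b_q v_q` as
`min(a_p, b_q) (v_p - v_q)` plus the two excess multiples of `v_p` and `v_q`, the Lipschitz bound
(the Euclidean distance being at most `√2` times the sup distance) and the norm bound make each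
term at most `√2 max(C, C')` times the corresponding term of the matching cost. Taking the
infimum over matchings gives the bound by `W1`.
-/

open Pointwise MeasureTheory Filter

/-- Support function of a set in a real inner product space. -/
noncomputable def suppFn {E : Type*} [NormedAddCommGroup E] [InnerProductSpace ℝ E]
    (A : Set E) (x : E) : ℝ :=
  sSup ((fun a => (inner ℝ x a : ℝ)) '' A)

/-- The lift of a planar point `p = (x, y)` to `(1, x, y) ∈ ℝ³` (Euclidean). -/
noncomputable def lift3 (p : ℝ × ℝ) : EuclideanSpace ℝ (Fin 3) := WithLp.toLp 2 ![1, p.1, p.2]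

/-- Lift zonoid of a weighted finite set of planar points: the Minkowski sum of the
segments `w p • [0, (1,p)]`. -/
noncomputable def liftZonoid (D : Finset (ℝ × ℝ)) (w : ℝ × ℝ → ℝ) :
    Set (EuclideanSpace ℝ (Fin 3)) :=
  ∑ p ∈ D, w p • segment ℝ (0 : EuclideanSpace ℝ (Fin 3)) (lift3 p)

/-- Persistence sphere (support function of the lift zonoid, explicit formula). -/
noncomputable def persSphere (D : Finset (ℝ × ℝ)) (w : ℝ × ℝ → ℝ)
    (v : EuclideanSpace ℝ (Fin 3)) : ℝ :=
  ∑ p ∈ D, w p * max 0 (inner ℝ v (lift3 p) : ℝ)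

/-- Cost of a partial matching `γ` (defined on `S ⊆ D`, with image in `D'`) between the
diagrams `(D, a)` and `(D', b)`.  Note that the norm on `ℝ × ℝ` is the sup-norm, and the
distance of `p = (x,y)` to the diagonal is `(y - x)/2`. -/
noncomputable def matchCost (D D' : Finset (ℝ × ℝ)) (a b : ℝ × ℝ → ℕ)
    (S : Finset (ℝ × ℝ)) (γ : ℝ × ℝ → ℝ × ℝ) : ℝ :=
  (∑ p ∈ S, (min (a p) (b (γ p)) : ℝ) * ‖p - γ p‖)
  + (∑ p ∈ S, ((a p : ℝ) - (min (a p) (b (γ p)) : ℝ)) * ((p.2 - p.1) / 2))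
  + (∑ p ∈ S, ((b (γ p) : ℝ) - (min (a p) (b (γ p)) : ℝ)) * (((γ p).2 - (γ p).1) / 2))
  + (∑ p ∈ D \ S, (a p : ℝ) * ((p.2 - p.1) / 2))
  + (∑ q ∈ D' \ S.image γ, (b q : ℝ) * ((q.2 - q.1) / 2))

/-- The 1-Wasserstein distance between persistence diagrams: infimum of matching costs
over all partial matchings. -/
noncomputable def W1 (D D' : Finset (ℝ × ℝ)) (a b : ℝ × ℝ → ℕ) : ℝ :=
  sInf { c : ℝ | ∃ (S : Finset (ℝ × ℝ)) (γ : ℝ × ℝ → ℝ × ℝ),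
    S ⊆ D ∧ S.image γ ⊆ D' ∧ Set.InjOn γ ↑S ∧ c = matchCost D D' a b S γ }

section MinkowskiSum

variable {E : Type*} [SeminormedAddCommGroup E]

theorem infEDist_add_le_add (x y : E) (s t : Set E) :
    Metric.infEDist (x + y) (s + t) ≤ Metric.infEDist x s + Metric.infEDist y t := by
  simp only [Metric.infEDist, ENNReal.iInf_add, ENNReal.add_iInf]
  refine le_iInf₂ fun b hb => le_iInf₂ fun a ha => ?_
  exact (Metric.infEDist_le_edist_of_mem (Set.add_mem_add ha hb)).trans
    (edist_add_add_le x y a b)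

theorem hausdorffEDist_add_le_add (s t s' t' : Set E) :
    Metric.hausdorffEDist (s + t) (s' + t') ≤
      Metric.hausdorffEDist s s' + Metric.hausdorffEDist t t' := by
  refine Metric.hausdorffEDist_le_of_infEDist ?_ ?_
  · rintro _ ⟨x, hx, y, hy, rfl⟩
    exact (infEDist_add_le_add x y s' t').trans (add_le_add
      (Metric.infEDist_le_hausdorffEDist_of_mem hx) (Metric.infEDist_le_hausdorffEDist_of_mem hy))
  · rintro _ ⟨x, hx, y, hy, rfl⟩
    rw [Metric.hausdorffEDist_comm (s := s), Metric.hausdorffEDist_comm (s := t)]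
    exact (infEDist_add_le_add x y s t).trans (add_le_add
      (Metric.infEDist_le_hausdorffEDist_of_mem hx) (Metric.infEDist_le_hausdorffEDist_of_mem hy))

theorem hausdorffEDist_sum_le_sum {ι : Type*} (I : Finset ι) (s t : ι → Set E) :
    Metric.hausdorffEDist (∑ i ∈ I, s i) (∑ i ∈ I, t i) ≤
      ∑ i ∈ I, Metric.hausdorffEDist (s i) (t i) := by
  induction I using Finset.cons_induction with
  | empty => simp [Metric.hausdorffEDist_self]
  | cons i I hi ih =>
    simp only [Finset.sum_cons]
    exact (hausdorffEDist_add_le_add _ _ _ _).trans (add_le_add le_rfl ih)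

end MinkowskiSum

section Zonotopes

variable {E : Type*} [SeminormedAddCommGroup E] [NormedSpace ℝ E] {ι κ : Type*}

theorem smul_segment (c : ℝ) (x y : E) : c • segment ℝ x y = segment ℝ (c • x) (c • y) := by
  have h := image_segment ℝ (LinearMap.lsmul ℝ E c).toAffineMap x y
  simp only [LinearMap.coe_toAffineMap, LinearMap.lsmul_apply] at h
  rw [← h, ← Set.image_smul]
  rfl

theorem hausdorffEDist_segment_zero_le (u v : E) :
    Metric.hausdorffEDist (segment ℝ 0 u) (segment ℝ 0 v) ≤ ‖u - v‖ₑ := by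
  have near : ∀ u v : E, ∀ x ∈ segment ℝ 0 u, ∃ y ∈ segment ℝ 0 v, edist x y ≤ ‖u - v‖ₑ := by
    intro u v x hx
    rw [segment_eq_image'] at hx
    obtain ⟨t, ht, rfl⟩ := hx
    refine ⟨t • v, ?_, ?_⟩
    · rw [segment_eq_image']
      exact ⟨t, ht, by simp⟩
    · simp only [sub_zero, zero_add]
      rw [edist_eq_enorm_sub, ← smul_sub, enorm_smul]
      refine mul_le_of_le_one_left' ?_
      simpa [Real.enorm_eq_ofReal_abs, abs_of_nonneg ht.1] using ht.2
  exact Metric.hausdorffEDist_le_of_mem_edist (near u v) fun x hx => by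
    simpa [enorm_sub_rev] using near v u x hx


theorem hausdorffEDist_sum_segment_le_sum (I : Finset ι) (f g : ι → E) :
    Metric.hausdorffEDist (∑ i ∈ I, segment ℝ 0 (f i)) (∑ i ∈ I, segment ℝ 0 (g i)) ≤
      ∑ i ∈ I, ‖f i - g i‖ₑ :=
  (hausdorffEDist_sum_le_sum I _ _).trans
    (Finset.sum_le_sum fun i _ => hausdorffEDist_segment_zero_le (f i) (g i))

theorem hausdorffEDist_sum_segment_zero_le_sum (I : Finset ι) (f : ι → E) :
    Metric.hausdorffEDist (∑ i ∈ I, segment ℝ 0 (f i)) 0 ≤ ∑ i ∈ I, ‖f i‖ₑ := by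
  simpa [segment_same, Set.singleton_zero] using hausdorffEDist_sum_segment_le_sum I f 0

theorem hausdorffDist_sum_segment_le_of_injOn [DecidableEq ι] [DecidableEq κ]
    {I S : Finset ι} {J : Finset κ} (f : ι → E) (g : κ → E) {γ : ι → κ} (hS : S ⊆ I)
    (hγ : S.image γ ⊆ J) (hinj : Set.InjOn γ S) :
    Metric.hausdorffDist (∑ i ∈ I, segment ℝ 0 (f i)) (∑ j ∈ J, segment ℝ 0 (g j)) ≤
      ∑ i ∈ S, ‖f i - g (γ i)‖ + ∑ i ∈ I \ S, ‖f i‖ + ∑ j ∈ J \ S.image γ, ‖g j‖ := by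
  have hI : ∑ i ∈ I, segment ℝ 0 (f i) =
      ∑ i ∈ S, segment ℝ 0 (f i) + ∑ i ∈ I \ S, segment ℝ 0 (f i) := by
    rw [add_comm, Finset.sum_sdiff hS]
  have hJ : ∑ j ∈ J, segment ℝ 0 (g j) =
      ∑ i ∈ S, segment ℝ 0 (g (γ i)) + ∑ j ∈ J \ S.image γ, segment ℝ 0 (g j) := by
    rw [add_comm, ← Finset.sum_sdiff hγ, Finset.sum_image hinj]
  have hE : Metric.hausdorffEDist (∑ i ∈ I, segment ℝ 0 (f i)) (∑ j ∈ J, segment ℝ 0 (g j)) ≤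
      ∑ i ∈ S, ‖f i - g (γ i)‖ₑ + ∑ i ∈ I \ S, ‖f i‖ₑ + ∑ j ∈ J \ S.image γ, ‖g j‖ₑ := by
    rw [hI, hJ, add_assoc]
    refine (hausdorffEDist_add_le_add _ _ _ _).trans (add_le_add
      (hausdorffEDist_sum_segment_le_sum S f (g ∘ γ)) ?_)
    refine (Metric.hausdorffEDist_triangle (t := 0)).trans (add_le_add
      (hausdorffEDist_sum_segment_zero_le_sum _ f) ?_)
    rw [Metric.hausdorffEDist_comm]
    exact hausdorffEDist_sum_segment_zero_le_sum _ g
  refine ENNReal.toReal_le_of_le_ofReal (by positivity) (hE.trans_eq ?_)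
  rw [ENNReal.ofReal_add (by positivity) (by positivity),
    ENNReal.ofReal_add (by positivity) (by positivity)]
  simp only [ENNReal.ofReal_sum_of_nonneg fun _ _ => norm_nonneg _, ofReal_norm]

theorem norm_smul_sub_smul_le (x y : E) {α β : ℝ} (hα : 0 ≤ α) (hβ : 0 ≤ β) :
    ‖α • x - β • y‖ ≤
      min α β * ‖x - y‖ + (α - min α β) * ‖x‖ + (β - min α β) * ‖y‖ := by
  have hαm : 0 ≤ α - min α β := sub_nonneg.2 (min_le_left α β)
  have hβm : 0 ≤ β - min α β := sub_nonneg.2 (min_le_right α β)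
  calc ‖α • x - β • y‖
      = ‖min α β • (x - y) + ((α - min α β) • x - (β - min α β) • y)‖ := by congr 1; module
    _ ≤ ‖min α β • (x - y)‖ + (‖(α - min α β) • x‖ + ‖(β - min α β) • y‖) :=
      (norm_add_le _ _).trans (add_le_add_right (norm_sub_le _ _) _)
    _ = _ := by
      rw [norm_smul_of_nonneg (le_min hα hβ), norm_smul_of_nonneg hαm, norm_smul_of_nonneg hβm]
      ring

theorem hausdorffDist_sum_segment_le_mul_matchCost (v : ℝ × ℝ → E) {K : ℝ}
    (hv : ∀ p q, ‖v p - v q‖ ≤ K * ‖p - q‖)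
    {D D' : Finset (ℝ × ℝ)} (a b : ℝ × ℝ → ℕ)
    (hD : ∀ p ∈ D, ‖v p‖ ≤ K * ((p.2 - p.1) / 2)) (hD' : ∀ q ∈ D', ‖v q‖ ≤ K * ((q.2 - q.1) / 2))
    {S : Finset (ℝ × ℝ)} {γ : ℝ × ℝ → ℝ × ℝ} (hS : S ⊆ D) (hγ : S.image γ ⊆ D')
    (hinj : Set.InjOn γ S) :
    Metric.hausdorffDist (∑ p ∈ D, segment ℝ 0 ((a p : ℝ) • v p))
      (∑ q ∈ D', segment ℝ 0 ((b q : ℝ) • v q)) ≤ K * matchCost D D' a b S γ := by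
  calc _ ≤ ∑ p ∈ S, ‖(a p : ℝ) • v p - (b (γ p) : ℝ) • v (γ p)‖ + ∑ p ∈ D \ S, ‖(a p : ℝ) • v p‖
        + ∑ q ∈ D' \ S.image γ, ‖(b q : ℝ) • v q‖ :=
      hausdorffDist_sum_segment_le_of_injOn _ _ hS hγ hinj
    _ ≤ ∑ p ∈ S, K * ((min (a p) (b (γ p)) : ℝ) * ‖p - γ p‖
          + ((a p : ℝ) - (min (a p) (b (γ p)) : ℝ)) * ((p.2 - p.1) / 2)
          + ((b (γ p) : ℝ) - (min (a p) (b (γ p)) : ℝ)) * (((γ p).2 - (γ p).1) / 2))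
        + ∑ p ∈ D \ S, K * ((a p : ℝ) * ((p.2 - p.1) / 2))
        + ∑ q ∈ D' \ S.image γ, K * ((b q : ℝ) * ((q.2 - q.1) / 2)) := by
      gcongr with p hp p hp q hq
      · refine (norm_smul_sub_smul_le _ _ (Nat.cast_nonneg _) (Nat.cast_nonneg _)).trans ?_
        calc _ ≤ min (a p : ℝ) (b (γ p)) * (K * ‖p - γ p‖)
              + ((a p : ℝ) - min (a p : ℝ) (b (γ p))) * (K * ((p.2 - p.1) / 2))
              + ((b (γ p) : ℝ) - min (a p : ℝ) (b (γ p))) * (K * (((γ p).2 - (γ p).1) / 2)) := by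
              gcongr
              exacts [hv _ _, sub_nonneg.2 (min_le_left _ _), hD p (hS hp),
                sub_nonneg.2 (min_le_right _ _), hD' _ (hγ (Finset.mem_image_of_mem γ hp))]
          _ = _ := by ring
      · rw [norm_smul_of_nonneg (Nat.cast_nonneg _)]
        exact (mul_le_mul_of_nonneg_left (hD p (Finset.mem_sdiff.1 hp).1)
          (Nat.cast_nonneg _)).trans_eq (by ring)
      · rw [norm_smul_of_nonneg (Nat.cast_nonneg _)]
        exact (mul_le_mul_of_nonneg_left (hD' q (Finset.mem_sdiff.1 hq).1)
          (Nat.cast_nonneg _)).trans_eq (by ring)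
    _ = K * matchCost D D' a b S γ := by
      simp only [matchCost, Finset.mul_sum, mul_add, Finset.sum_add_distrib]

end Zonotopes

theorem sqrt_sq_add_sq_le_sqrt_two_mul_norm (p q : ℝ × ℝ) :
    Real.sqrt ((p.1 - q.1) ^ 2 + (p.2 - q.2) ^ 2) ≤ Real.sqrt 2 * ‖p - q‖ := by
  have h1 : (p.1 - q.1) ^ 2 ≤ ‖p - q‖ ^ 2 := by
    simpa [Real.norm_eq_abs, sq_abs] using pow_le_pow_left₀ (norm_nonneg _) (norm_fst_le (p - q)) 2
  have h2 : (p.2 - q.2) ^ 2 ≤ ‖p - q‖ ^ 2 := by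
    simpa [Real.norm_eq_abs, sq_abs] using pow_le_pow_left₀ (norm_nonneg _) (norm_snd_le (p - q)) 2
  calc Real.sqrt ((p.1 - q.1) ^ 2 + (p.2 - q.2) ^ 2) ≤ Real.sqrt (2 * ‖p - q‖ ^ 2) :=
        Real.sqrt_le_sqrt (by linarith)
    _ = Real.sqrt 2 * ‖p - q‖ := by rw [Real.sqrt_mul zero_le_two, Real.sqrt_sq (norm_nonneg _)]

theorem liftZonoid_eq_sum_segment (D : Finset (ℝ × ℝ)) (w : ℝ × ℝ → ℝ) :
    liftZonoid D w = ∑ p ∈ D, segment ℝ 0 (w p • lift3 p) := by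
  simp only [liftZonoid, smul_segment, smul_zero]

theorem le_mul_W1 {x K : ℝ} (hK : 0 < K) {D D' : Finset (ℝ × ℝ)} {a b : ℝ × ℝ → ℕ}
    (h : ∀ (S : Finset (ℝ × ℝ)) (γ : ℝ × ℝ → ℝ × ℝ), S ⊆ D → S.image γ ⊆ D' →
      Set.InjOn γ S → x ≤ K * matchCost D D' a b S γ) :
    x ≤ K * W1 D D' a b := by
  rw [← div_le_iff₀' hK]
  refine le_csInf ⟨_, ∅, id, by simp, by simp, by simp, rfl⟩ ?_
  rintro _ ⟨S, γ, hS, hγ, hinj, rfl⟩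
  rw [div_le_iff₀' hK]
  exact h S γ hS hγ hinj

theorem liftZonoid_stability_general
    (ω : ℝ × ℝ → ℝ)
    (C C' : ℝ) (hC : 0 < C)
    (hLip : ∀ p q : ℝ × ℝ,
      ‖ω p • lift3 p - ω q • lift3 q‖ ≤ C * Real.sqrt ((p.1 - q.1) ^ 2 + (p.2 - q.2) ^ 2))
    (hNorm : ∀ p : ℝ × ℝ, p.1 < p.2 → ‖ω p • lift3 p‖ ≤ C' * ((p.2 - p.1) / 2))
    (D D' : Finset (ℝ × ℝ)) (a b : ℝ × ℝ → ℕ)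
    (hD : ∀ p ∈ D, p.1 < p.2) (hD' : ∀ q ∈ D', q.1 < q.2) :
    Metric.hausdorffDist
        (liftZonoid D (fun p => ω p * (a p : ℝ)))
        (liftZonoid D' (fun q => ω q * (b q : ℝ)))
      ≤ Real.sqrt 2 * max C C' * W1 D D' a b := by
  have hLipK (p q : ℝ × ℝ) :
      ‖ω p • lift3 p - ω q • lift3 q‖ ≤ Real.sqrt 2 * max C C' * ‖p - q‖ :=
    calc _ ≤ C * (Real.sqrt 2 * ‖p - q‖) :=
          (hLip p q).trans (by gcongr; exact sqrt_sq_add_sq_le_sqrt_two_mul_norm p q)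
      _ ≤ Real.sqrt 2 * max C C' * ‖p - q‖ := by
          rw [mul_left_comm, ← mul_assoc]; gcongr; exact le_max_left C C'
  have hNormK (p : ℝ × ℝ) (hp : p.1 < p.2) :
      ‖ω p • lift3 p‖ ≤ Real.sqrt 2 * max C C' * ((p.2 - p.1) / 2) :=
    (hNorm p hp).trans <| by
      gcongr
      exact (le_max_right C C').trans
        (le_mul_of_one_le_left (hC.le.trans (le_max_left C C')) Real.one_lt_sqrt_two.le)
  simp only [liftZonoid_eq_sum_segment, mul_comm (ω _), mul_smul]
  refine le_mul_W1 (mul_pos (by positivity) (lt_max_of_lt_left hC)) fun S γ hS hγ hinj => ?_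
  exact hausdorffDist_sum_segment_le_mul_matchCost _ hLipK a b
    (fun p hp => hNormK p (hD p hp)) (fun q hq => hNormK q (hD' q hq)) hS hγ hinj

/-- stability of lift zonoids of reweighted persistence diagrams with
respect to the 1-Wasserstein distance, for a stable weighting `ω` with constants `C, C'`. -/
theorem liftZonoid_stability
    (ω : ℝ × ℝ → ℝ) (hω : ∀ p, ω p ∈ Set.Ioc (0 : ℝ) 1)
    (C C' : ℝ) (hC : 0 < C) (hC' : 0 < C')
    (hLip : ∀ p q : ℝ × ℝ,
      ‖ω p • lift3 p - ω q • lift3 q‖ ≤ C * Real.sqrt ((p.1 - q.1) ^ 2 + (p.2 - q.2) ^ 2))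
    (hNorm : ∀ p : ℝ × ℝ, p.1 < p.2 → ‖ω p • lift3 p‖ ≤ C' * ((p.2 - p.1) / 2))
    (D D' : Finset (ℝ × ℝ)) (a b : ℝ × ℝ → ℕ)
    (hD : ∀ p ∈ D, p.1 < p.2) (hD' : ∀ q ∈ D', q.1 < q.2)
    (ha : ∀ p ∈ D, 0 < a p) (hb : ∀ q ∈ D', 0 < b q) :
    Metric.hausdorffDist
        (liftZonoid D (fun p => ω p * (a p : ℝ)))
        (liftZonoid D' (fun q => ω q * (b q : ℝ)))
      ≤ Real.sqrt 2 * max C C' * W1 D D' a b :=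
  liftZonoid_stability_general ω C C' hC hLip hNorm D D' a b hD hD'
end

section
/- Instability of the unweighted linear construction: for the weighting ω(p) = y − x (for p = (x,y)) and the sequence of single-point diagrams D_n = {p_n} with p_n = (n^2, n^2 + 1/n) and multiplicity 1, the 1-Wasserstein distance W_1(μ_{D_n}, μ_∅) = 1/(2n) → 0 while the Hausdorff distance d_H(Z_{μ^ω_{D_n}}, Z_{μ^ω_∅}) = d_H((1/n)[0,(1,p_n)], {0}) → ∞. Hence no constant C exists with d_H(Z_{μ^ω_D}, Z_{μ^ω_{D'}}) ≤ C·W_1(μ_D, μ_{D'}) for all diagrams. -/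
open Pointwise MeasureTheory Filter

section

variable {E : Type*} [NormedAddCommGroup E] [NormedSpace ℝ E]

theorem smul_segment_zero (c : ℝ) (v : E) :
    c • segment ℝ (0 : E) v = segment ℝ 0 (c • v) := by
  rw [← Set.image_smul]
  simpa using image_segment ℝ (DistribSMul.toLinearMap ℝ E c).toAffineMap 0 v

theorem hausdorffDist_segment_zero_singleton_zero (v : E) :
    Metric.hausdorffDist (segment ℝ (0 : E) v) {0} = ‖v‖ := by
  have hsub : segment ℝ (0 : E) v ⊆ Metric.closedBall 0 ‖v‖ := by
    simpa using segment_subset_closedBall_left (0 : E) v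
  apply le_antisymm
  · refine Metric.hausdorffDist_le_of_mem_dist (norm_nonneg v) (fun x hx => ⟨0, rfl, ?_⟩)
      (fun x hx => ⟨0, left_mem_segment ℝ 0 v, ?_⟩)
    · simpa using hsub hx
    · simp [Set.mem_singleton_iff.mp hx]
  · have hfin := Metric.hausdorffEDist_ne_top_of_nonempty_of_bounded ⟨0, left_mem_segment ℝ 0 v⟩
      (Set.singleton_nonempty 0) (Metric.isBounded_closedBall.subset hsub)
      Bornology.isBounded_singleton
    simpa using Metric.infDist_le_hausdorffDist_of_mem (right_mem_segment ℝ 0 v) hfin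

end

theorem norm_lift3 (p : ℝ × ℝ) : ‖lift3 p‖ = √(1 + p.1 ^ 2 + p.2 ^ 2) := by
  simp [EuclideanSpace.norm_eq, lift3, Fin.sum_univ_three, add_assoc]

theorem liftZonoid_empty (w : ℝ × ℝ → ℝ) : liftZonoid ∅ w = {0} := by
  simp [liftZonoid]
  rfl

theorem liftZonoid_singleton (p : ℝ × ℝ) (w : ℝ × ℝ → ℝ) :
    liftZonoid {p} w = segment ℝ 0 (w p • lift3 p) := by
  rw [liftZonoid, Finset.sum_singleton, smul_segment_zero]

theorem hausdorffDist_liftZonoid_singleton_empty (p : ℝ × ℝ) (w w' : ℝ × ℝ → ℝ) :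
    Metric.hausdorffDist (liftZonoid {p} w) (liftZonoid ∅ w') = |w p| * ‖lift3 p‖ := by
  rw [liftZonoid_singleton, liftZonoid_empty, hausdorffDist_segment_zero_singleton_zero,
    norm_smul, Real.norm_eq_abs]

theorem W1_empty_right (D : Finset (ℝ × ℝ)) (a b : ℝ × ℝ → ℕ) :
    W1 D ∅ a b = ∑ p ∈ D, (a p : ℝ) * ((p.2 - p.1) / 2) := by
  have hcost : ∀ γ : ℝ × ℝ → ℝ × ℝ,
      matchCost D ∅ a b ∅ γ = ∑ p ∈ D, (a p : ℝ) * ((p.2 - p.1) / 2) := by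
    simp [matchCost]
  suffices h : {c : ℝ | ∃ (S : Finset (ℝ × ℝ)) (γ : ℝ × ℝ → ℝ × ℝ),
      S ⊆ D ∧ S.image γ ⊆ ∅ ∧ Set.InjOn γ ↑S ∧ c = matchCost D ∅ a b S γ} =
      {∑ p ∈ D, (a p : ℝ) * ((p.2 - p.1) / 2)} by
    rw [W1, h, csInf_singleton]
  ext c
  constructor
  · rintro ⟨S, γ, -, hS, -, rfl⟩
    rw [Finset.image_eq_empty.mp (Finset.subset_empty.mp hS)]
    exact hcost γ
  · rintro rfl
    exact ⟨∅, id, Finset.empty_subset D, by simp, by simp, (hcost id).symm⟩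

theorem not_eventually_le_mul_of_tendsto {α : Type*} {l : Filter α} [l.NeBot] {f g : α → ℝ}
    (hf : Tendsto f l atTop) (hg : Tendsto g l (nhds 0)) (C : ℝ) :
    ¬ ∀ᶠ x in l, f x ≤ C * g x := by
  intro hle
  have hCg : Tendsto (fun x => C * g x) l (nhds 0) := by simpa using hg.const_mul C
  obtain ⟨x, hfx, hle, hCg⟩ := ((hf.eventually_ge_atTop 1).and
    (hle.and (hCg.eventually (gt_mem_nhds one_pos)))).exists
  linarith

-- Since `1 / 0 = 0`, `instabilityPoint 0 = (0, 0)` lies on the diagonal.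
noncomputable def instabilityPoint (n : ℕ) : ℝ × ℝ := ((n : ℝ) ^ 2, (n : ℝ) ^ 2 + 1 / (n : ℝ))

theorem instabilityPoint_fst_lt_snd {n : ℕ} (hn : 0 < n) :
    (instabilityPoint n).1 < (instabilityPoint n).2 := by
  simp [instabilityPoint, hn]

theorem W1_instabilityPoint_empty (n : ℕ) :
    W1 {instabilityPoint n} ∅ (fun _ => 1) (fun _ => 1) = 1 / (2 * (n : ℝ)) := by
  rw [W1_empty_right, Finset.sum_singleton]
  simp only [instabilityPoint]
  ring

theorem natCast_le_hausdorffDist_instabilityPoint (n : ℕ) (w : ℝ × ℝ → ℝ) :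
    (n : ℝ) ≤ Metric.hausdorffDist
      (liftZonoid {instabilityPoint n} (fun p => (p.2 - p.1) * ((1 : ℕ) : ℝ))) (liftZonoid ∅ w) := by
  rw [hausdorffDist_liftZonoid_singleton_empty]
  have hsq : (n : ℝ) ^ 2 ≤ ‖lift3 (instabilityPoint n)‖ := by
    rw [norm_lift3]
    exact Real.le_sqrt_of_sq_le (by simp only [instabilityPoint]; nlinarith)
  calc (n : ℝ) = |1 / (n : ℝ)| * (n : ℝ) ^ 2 := by
        rw [abs_of_nonneg (by positivity)]
        rcases eq_or_ne (n : ℝ) 0 with h | h <;> field_simp [h]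
    _ ≤ _ := by
        simp only [instabilityPoint, Nat.cast_one, mul_one, add_sub_cancel_left]
        exact mul_le_mul_of_nonneg_left hsq (abs_nonneg _)

/-- instability of the unweighted linear construction `ω(p) = y - x`.
For the single-point diagrams `D_n = {(n², n² + 1/n)}` with multiplicity 1, the
1-Wasserstein distance to the empty diagram is `1/(2n) → 0`, while the Hausdorff distance
between the lift zonoids tends to infinity; hence no stability constant exists. -/
theorem unweighted_construction_unstable :
    (∀ n : ℕ, 1 ≤ n →
      W1 ({((n : ℝ) ^ 2, (n : ℝ) ^ 2 + 1 / (n : ℝ))} : Finset (ℝ × ℝ)) (∅ : Finset (ℝ × ℝ))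
          (fun _ => 1) (fun _ => 1)
        = 1 / (2 * (n : ℝ)))
    ∧ Tendsto (fun n : ℕ =>
        Metric.hausdorffDist
          (liftZonoid ({((n : ℝ) ^ 2, (n : ℝ) ^ 2 + 1 / (n : ℝ))} : Finset (ℝ × ℝ))
            (fun p => (p.2 - p.1) * ((1 : ℕ) : ℝ)))
          (liftZonoid (∅ : Finset (ℝ × ℝ)) (fun p => (p.2 - p.1) * ((1 : ℕ) : ℝ))))
        atTop atTop
    ∧ ¬ ∃ Cst : ℝ, ∀ (D D' : Finset (ℝ × ℝ)) (a b : ℝ × ℝ → ℕ),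
        (∀ p ∈ D, p.1 < p.2) → (∀ q ∈ D', q.1 < q.2) →
        (∀ p ∈ D, 0 < a p) → (∀ q ∈ D', 0 < b q) →
        Metric.hausdorffDist
            (liftZonoid D (fun p => (p.2 - p.1) * (a p : ℝ)))
            (liftZonoid D' (fun q => (q.2 - q.1) * (b q : ℝ)))
          ≤ Cst * W1 D D' a b := by
  have hdist := tendsto_atTop_mono
    (fun n => natCast_le_hausdorffDist_instabilityPoint n fun p => (p.2 - p.1) * ((1 : ℕ) : ℝ))
    tendsto_natCast_atTop_atTop
  refine ⟨fun n _ => W1_instabilityPoint_empty n, hdist, ?_⟩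
  rintro ⟨C, hC⟩
  have hW1 : Tendsto (fun n : ℕ => 1 / (2 * (n : ℝ))) atTop (nhds 0) := by
    simpa [div_eq_inv_mul, mul_comm] using tendsto_const_div_atTop_nhds_zero_nat (1 / 2 : ℝ)
  refine not_eventually_le_mul_of_tendsto hdist hW1 C ?_
  filter_upwards [eventually_gt_atTop 0] with n hn
  rw [← W1_instabilityPoint_empty n]
  exact hC _ _ _ _ (by simpa using instabilityPoint_fst_lt_snd hn) (by simp) (by simp) (by simp)
end

section
/- Injectivity of persistence spheres with a positive weighting: if ω : R^2 → (0,1] is strictly positive and φ^ω_{μ_D} = φ^ω_{μ_{D'}} as functions on S^2, then μ_D = μ_{D'}. That is, Σ_{p∈D} ω(p) a_p ReLU(⟨v,(1,p)⟩) = Σ_{q∈D'} ω(q) b_q ReLU(⟨v,(1,q)⟩) for all unit v ∈ R^3 implies the two weighted point sets coincide. -/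
open Pointwise MeasureTheory Filter

/-!
If two weighted diagrams have the same persistence sphere on `S²`, then by positive homogeneity
they have the same one on all of `ℝ³`, so the signed weight `F = w_D - w_{D'}` satisfies
`∑ F p · ReLU ⟪v, (1,p)⟫ = 0` for every `v`; adding the same identity at `-v` turns `ReLU` into
`|·|`. Lifts of distinct points are never parallel (their first coordinate is `1`), so for each
`p₀` there is a `v` orthogonal to `(1,p₀)` but to no other lift. Along the line
`v + τ (1,p₀)` every other term is affine in `τ` near `0`, whereas the `p₀` term is
`F p₀ ‖(1,p₀)‖² |τ|`; the kink at `τ = 0` forces `F p₀ = 0`.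
-/

open Topology

lemma abs_add_add_abs_sub_eq_two_mul_abs {a b : ℝ} (h : |b| ≤ |a|) :
    |a + b| + |a - b| = 2 * |a| := by
  rcases abs_le.mp h with ⟨h₁, h₂⟩
  rcases le_total 0 a with ha | ha
  · rw [abs_of_nonneg ha] at h₁ h₂
    rw [abs_of_nonneg (by linarith), abs_of_nonneg (by linarith), abs_of_nonneg ha]; ring
  · rw [abs_of_nonpos ha] at h₁ h₂
    rw [abs_of_nonpos (by linarith), abs_of_nonpos (by linarith), abs_of_nonpos ha]; ring

lemma eq_of_forall_norm_eq_one_of_smul {E : Type*} [NormedAddCommGroup E] [NormedSpace ℝ E]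
    {f g : E → ℝ} (hf : ∀ c : ℝ, 0 ≤ c → ∀ v, f (c • v) = c * f v)
    (hg : ∀ c : ℝ, 0 ≤ c → ∀ v, g (c • v) = c * g v) (h : ∀ v, ‖v‖ = 1 → f v = g v) :
    f = g := by
  funext v
  rcases eq_or_ne v 0 with rfl | hv
  · rw [← zero_smul ℝ (0 : E), hf 0 le_rfl, hg 0 le_rfl, zero_mul, zero_mul]
  · have hv' : ‖v‖ ≠ 0 := norm_ne_zero_iff.mpr hv
    rw [← smul_inv_smul₀ hv' v, hf _ (norm_nonneg v), hg _ (norm_nonneg v),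
      h _ (by rw [norm_smul, norm_inv, norm_norm, inv_mul_cancel₀ hv'])]

lemma Finset.eq_of_indicator_eq {α M : Type*} [Zero M] {s t : Finset α} {f g : α → M}
    (hf : ∀ x ∈ s, f x ≠ 0) (hg : ∀ x ∈ t, g x ≠ 0)
    (h : (↑s : Set α).indicator f = (↑t : Set α).indicator g) :
    s = t ∧ ∀ x ∈ s, f x = g x := by
  have hst : (s : Set α) = t := by
    rw [← Set.inter_eq_left.mpr (show (s : Set α) ⊆ Function.support f from hf),
      ← Set.support_indicator, h, Set.support_indicator,
      Set.inter_eq_left.mpr (show (t : Set α) ⊆ Function.support g from hg)]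
  obtain rfl := Finset.coe_inj.mp hst
  exact ⟨rfl, fun x hx => by simpa [hx] using congrFun h x⟩

section

variable {E : Type*} [NormedAddCommGroup E] [InnerProductSpace ℝ E]

lemma exists_inner_ne_zero_of_notMem_span_singleton {u₀ w : E} (hw : w ∉ ℝ ∙ u₀) :
    ∃ x, inner ℝ x u₀ = 0 ∧ inner ℝ x w ≠ 0 := by
  set x := w - (ℝ ∙ u₀).starProjection w
  have hx : x ∈ (ℝ ∙ u₀)ᗮ := Submodule.sub_starProjection_mem_orthogonal w
  have hx0 : x ≠ 0 := fun h => hw (sub_eq_zero.mp h ▸ Submodule.starProjection_apply_mem _ w)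
  refine ⟨x, Submodule.inner_left_of_mem_orthogonal (Submodule.mem_span_singleton_self u₀) hx, ?_⟩
  calc inner ℝ x w = inner ℝ x (x + (ℝ ∙ u₀).starProjection w) := by rw [sub_add_cancel]
    _ = ‖x‖ ^ 2 := by
      rw [inner_add_right, Submodule.inner_left_of_mem_orthogonal
        (Submodule.starProjection_apply_mem _ w) hx, add_zero, real_inner_self_eq_norm_sq]
    _ ≠ 0 := by positivity

lemma exists_inner_eq_zero_forall_inner_ne_zero {ι : Type*} (s : Finset ι) (u₀ : E)
    (u : ι → E) (hu : ∀ i ∈ s, u i ∉ ℝ ∙ u₀) :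
    ∃ v, inner ℝ v u₀ = 0 ∧ ∀ i ∈ s, inner ℝ v (u i) ≠ 0 := by
  set K : Submodule ℝ E := LinearMap.ker (innerₛₗ ℝ u₀)
  by_contra! hcover
  obtain ⟨⟨i, hi⟩, htop⟩ := Subspace.exists_eq_top_of_iUnion_eq_univ
    (p := fun i : s => (LinearMap.ker (innerₛₗ ℝ (u i))).comap K.subtype) <| by
    refine Set.eq_univ_of_forall fun x => ?_
    obtain ⟨i, hi, hxi⟩ := hcover x (by rw [real_inner_comm]; exact LinearMap.mem_ker.mp x.2)
    exact Set.mem_iUnion.mpr ⟨⟨i, hi⟩, by simpa [real_inner_comm] using hxi⟩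
  obtain ⟨x, hx₀, hxi⟩ := exists_inner_ne_zero_of_notMem_span_singleton (hu i hi)
  have : (⟨x, by simpa [K, real_inner_comm] using hx₀⟩ : K) ∈
      (LinearMap.ker (innerₛₗ ℝ (u i))).comap K.subtype := htop ▸ Submodule.mem_top
  exact hxi (by simpa [real_inner_comm] using this)

lemma sum_mul_abs_inner_eq_zero {ι : Type*} {s : Finset ι} {u : ι → E} {F : ι → ℝ}
    (hF : ∀ v, ∑ i ∈ s, F i * max 0 (inner ℝ v (u i)) = 0) (v : E) :
    ∑ i ∈ s, F i * |inner ℝ v (u i)| = 0 :=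
  calc ∑ i ∈ s, F i * |inner ℝ v (u i)|
      = ∑ i ∈ s, F i * max 0 (inner ℝ v (u i)) + ∑ i ∈ s, F i * max 0 (inner ℝ (-v) (u i)) := by
        rw [← Finset.sum_add_distrib]
        refine Finset.sum_congr rfl fun i _ => ?_
        rw [← mul_add, inner_neg_left, max_comm, max_comm 0, max_zero_add_max_neg_zero_eq_abs_self]
    _ = 0 := by rw [hF, hF, add_zero]

lemma eq_zero_of_sum_mul_abs_inner_eq_zero {ι : Type*} [DecidableEq ι] {s : Finset ι} {u : ι → E}
    {F : ι → ℝ} (hF : ∀ v, ∑ i ∈ s, F i * |inner ℝ v (u i)| = 0) {i₀ : ι} (hi₀ : i₀ ∈ s)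
    (hu₀ : u i₀ ≠ 0) (hu : ∀ i ∈ s, i ≠ i₀ → u i ∉ ℝ ∙ u i₀) : F i₀ = 0 := by
  obtain ⟨v, hv₀, hv⟩ := exists_inner_eq_zero_forall_inner_ne_zero (s.erase i₀) (u i₀) u
    fun i hi => hu i (Finset.mem_of_mem_erase hi) (Finset.ne_of_mem_erase hi)
  set c : ι → ℝ := fun i => inner ℝ v (u i)
  set d : ι → ℝ := fun i => inner ℝ (u i₀) (u i)
  have hsmall : ∀ᶠ t in 𝓝 (0 : ℝ), ∀ i ∈ s.erase i₀, |t * d i| ≤ |c i| := by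
    refine (Filter.eventually_all_finset _).mpr fun i hi => ?_
    have : Tendsto (fun t : ℝ => |t * d i|) (𝓝 0) (𝓝 0) := by
      simpa using ((continuous_id.mul continuous_const).abs).tendsto (0 : ℝ)
    exact this.eventually (ge_mem_nhds (abs_pos.mpr (hv i hi)))
  obtain ⟨t, ht, htpos⟩ := (hsmall.filter_mono nhdsWithin_le_nhds).and
    (self_mem_nhdsWithin (s := Set.Ioi 0)) |>.exists
  have hsecond : ∑ i ∈ s, F i * (|c i + t * d i| + |c i - t * d i| - 2 * |c i|) = 0 := by
    have hplus : ∑ i ∈ s, F i * |c i + t * d i| = 0 := by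
      simpa only [inner_add_left, real_inner_smul_left] using hF (v + t • u i₀)
    have hminus : ∑ i ∈ s, F i * |c i - t * d i| = 0 := by
      simpa only [inner_sub_left, real_inner_smul_left] using hF (v - t • u i₀)
    have hzero : ∑ i ∈ s, F i * |c i| = 0 := hF v
    calc _ = ∑ i ∈ s, F i * |c i + t * d i| + ∑ i ∈ s, F i * |c i - t * d i|
          - 2 * ∑ i ∈ s, F i * |c i| := by
          rw [Finset.mul_sum, ← Finset.sum_add_distrib, ← Finset.sum_sub_distrib]
          exact Finset.sum_congr rfl fun i _ => by ring
      _ = 0 := by rw [hplus, hminus, hzero]; ring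
  rw [Finset.sum_eq_single_of_mem i₀ hi₀ fun i hi hne => by
    rw [abs_add_add_abs_sub_eq_two_mul_abs (ht i (Finset.mem_erase.mpr ⟨hne, hi⟩)), sub_self,
      mul_zero]] at hsecond
  have hd₀ : 0 < t * d i₀ := mul_pos htpos (real_inner_self_pos.mpr hu₀)
  rw [show c i₀ = 0 from hv₀, zero_add, zero_sub, abs_neg, abs_zero, abs_of_pos hd₀] at hsecond
  nlinarith

end

lemma lift3_ne_zero (p : ℝ × ℝ) : lift3 p ≠ 0 := fun h => by
  simpa [lift3] using congrArg (· 0) h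

lemma lift3_mem_span_singleton_iff {p q : ℝ × ℝ} : lift3 p ∈ ℝ ∙ lift3 q ↔ p = q := by
  refine ⟨fun h => ?_, fun h => h ▸ Submodule.mem_span_singleton_self _⟩
  obtain ⟨c, hc⟩ := Submodule.mem_span_singleton.mp h
  have h₀ := congrArg (· 0) hc
  have h₁ := congrArg (· 1) hc
  have h₂ := congrArg (· 2) hc
  simp only [lift3, PiLp.smul_apply, smul_eq_mul, Matrix.cons_val_zero, Matrix.cons_val_one,
    Matrix.cons_val, mul_one] at h₀ h₁ h₂
  subst h₀
  rw [one_mul] at h₁ h₂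
  exact Prod.ext h₁.symm h₂.symm

lemma persSphere_smul (D : Finset (ℝ × ℝ)) (w : ℝ × ℝ → ℝ) {c : ℝ} (hc : 0 ≤ c)
    (v : EuclideanSpace ℝ (Fin 3)) : persSphere D w (c • v) = c * persSphere D w v := by
  rw [persSphere, persSphere, Finset.mul_sum]
  refine Finset.sum_congr rfl fun p _ => ?_
  rw [real_inner_smul_left, mul_left_comm, mul_max_of_nonneg _ _ hc, mul_zero]

lemma persSphere_eq_sum_indicator {D E : Finset (ℝ × ℝ)} (hDE : D ⊆ E) (w : ℝ × ℝ → ℝ)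
    (v : EuclideanSpace ℝ (Fin 3)) :
    persSphere D w v = ∑ p ∈ E, (↑D : Set (ℝ × ℝ)).indicator w p * max 0 (inner ℝ v (lift3 p)) := by
  rw [persSphere, ← Finset.sum_indicator_subset _ hDE]
  exact Finset.sum_congr rfl fun p _ => Set.indicator_mul_left _ _ _

theorem persSphere_injective_general
    (ω : ℝ × ℝ → ℝ) (hω : ∀ p, ω p ∈ Set.Ioc (0 : ℝ) 1)
    (D D' : Finset (ℝ × ℝ)) (a b : ℝ × ℝ → ℕ)
    (ha : ∀ p ∈ D, 0 < a p) (hb : ∀ q ∈ D', 0 < b q)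
    (h : ∀ v : EuclideanSpace ℝ (Fin 3), ‖v‖ = 1 →
      persSphere D (fun p => ω p * (a p : ℝ)) v = persSphere D' (fun q => ω q * (b q : ℝ)) v) :
    D = D' ∧ ∀ p ∈ D, a p = b p := by
  set wa : ℝ × ℝ → ℝ := fun p => ω p * (a p : ℝ)
  set wb : ℝ × ℝ → ℝ := fun q => ω q * (b q : ℝ)
  have hall : persSphere D wa = persSphere D' wb := eq_of_forall_norm_eq_one_of_smul
    (fun _ hc => persSphere_smul D wa hc) (fun _ hc => persSphere_smul D' wb hc) h
  set F := (↑D : Set (ℝ × ℝ)).indicator wa - (↑D' : Set (ℝ × ℝ)).indicator wb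
  have hF : ∀ v, ∑ p ∈ D ∪ D', F p * max 0 (inner ℝ v (lift3 p)) = 0 := fun v => by
    simp only [F, Pi.sub_apply, sub_mul, Finset.sum_sub_distrib,
      ← persSphere_eq_sum_indicator Finset.subset_union_left,
      ← persSphere_eq_sum_indicator Finset.subset_union_right, hall, sub_self]
  have hF₀ : ∀ p, F p = 0 := fun p => by
    by_cases hp : p ∈ D ∪ D'
    · exact eq_zero_of_sum_mul_abs_inner_eq_zero (sum_mul_abs_inner_eq_zero hF) hp
        (lift3_ne_zero p) fun q _ hqp => mt lift3_mem_span_singleton_iff.mp hqp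
    · simp_all [F]
  obtain ⟨rfl, hab⟩ := Finset.eq_of_indicator_eq
    (fun p hp => (mul_pos (hω p).1 (Nat.cast_pos.mpr (ha p hp))).ne')
    (fun q hq => (mul_pos (hω q).1 (Nat.cast_pos.mpr (hb q hq))).ne')
    (funext fun p => sub_eq_zero.mp (hF₀ p))
  exact ⟨rfl, fun p hp => by exact_mod_cast mul_left_cancel₀ (hω p).1.ne' (hab p hp)⟩

/-- injectivity of persistence spheres for a strictly positive weighting:
if the persistence spheres agree on the unit sphere, the weighted diagrams coincide. -/
theorem persSphere_injective
    (ω : ℝ × ℝ → ℝ) (hω : ∀ p, ω p ∈ Set.Ioc (0 : ℝ) 1)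
    (D D' : Finset (ℝ × ℝ)) (a b : ℝ × ℝ → ℕ)
    (hD : ∀ p ∈ D, p.1 < p.2) (hD' : ∀ q ∈ D', q.1 < q.2)
    (ha : ∀ p ∈ D, 0 < a p) (hb : ∀ q ∈ D', 0 < b q)
    (h : ∀ v : EuclideanSpace ℝ (Fin 3), ‖v‖ = 1 →
      persSphere D (fun p => ω p * (a p : ℝ)) v = persSphere D' (fun q => ω q * (b q : ℝ)) v) :
    D = D' ∧ ∀ p ∈ D, a p = b p :=
  persSphere_injective_general ω hω D D' a b ha hb h
end
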